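/- Let X be a nonempty set and 𝓛 a space of abstract linear functions on X containing the zero function. Let f₁, …, f_m : X → ℝ ∪ {+∞} (m ≥ 2) and let x ∈ ⋂_{i=1}^m dom f_i. The following are equivalent: (i) 0 ∈ ⋂_{ε>0} ( ∂_ε f₁(x) + ⋯ + ∂_ε f_m(x) ); (ii) (f₁ + ⋯ + f_m)*(0) = (f₁* □ ⋯ □ f_m*)(0) < +∞ and x is a global minimizer of f₁ + ⋯ + f_m over X. -/

import Mathlib

open Set
open scoped Pointwise

variable {X : Type*}

/-- A space of abstract linear functions on `X`: a nonempty family of real-valued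
functions closed under addition, each of whose members admits additive decompositions
of every length `m ≥ 1` inside the family. -/
def IsLinSpace (L : Set (X → ℝ)) : Prop :=
  L.Nonempty ∧
    (∀ l₁ ∈ L, ∀ l₂ ∈ L, l₁ + l₂ ∈ L) ∧
    (∀ l ∈ L, ∀ m : ℕ, 1 ≤ m →
      ∃ g : Fin m → (X → ℝ), (∀ i, g i ∈ L) ∧ l = ∑ i, g i)

/-- Fenchel conjugate of `f : X → ℝ ∪ {+∞}`: `f*(l) = sup_x (l x - f x)`. -/
noncomputable def fconj (f : X → EReal) (l : X → ℝ) : EReal :=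
  ⨆ x : X, ((l x : EReal) - f x)

/-- Abstract biconjugate `f**(x) = sup_{l ∈ L} (l x - f*(l))`. -/
noncomputable def biconj (L : Set (X → ℝ)) (f : X → EReal) (x : X) : EReal :=
  ⨆ l ∈ L, ((l x : EReal) - fconj f l)

/-- ε-subdifferential of `f` at `x` (empty whenever `x ∉ dom f`, i.e. `f x = ⊤`):
`l ∈ ∂_ε f(x)` iff `l ∈ L`, `f x < ⊤` and `f y - f x - (l y - l x) + ε ≥ 0` for all `y`. -/
def subdiff (L : Set (X → ℝ)) (f : X → EReal) (ε : ℝ) (x : X) : Set (X → ℝ) :=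
  {l | l ∈ L ∧ f x < ⊤ ∧ ∀ y, f x + ((l y - l x : ℝ) : EReal) ≤ f y + (ε : EReal)}

/-- Minkowski sum of finitely many subsets of an additive commutative monoid. -/
def minkSum {α : Type*} [AddCommMonoid α] {m : ℕ} (S : Fin m → Set α) : Set α :=
  {a | ∃ g : Fin m → α, (∀ i, g i ∈ S i) ∧ a = ∑ i, g i}

/-- Infimal convolution (over `L`) of finitely many functions,
with the infimum over the empty set equal to `+∞`. -/
noncomputable def infConv (L : Set (X → ℝ)) {m : ℕ}
    (φ : Fin m → (X → ℝ) → EReal) (l : X → ℝ) : EReal :=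
  ⨅ (g : Fin m → (X → ℝ)) (_ : ∀ i, g i ∈ L) (_ : ∑ i, g i = l), ∑ i, φ i (g i)

/-- The space of abstract affine functions generated by `L`: vertical shifts of members of `L`. -/
def Hspace (L : Set (X → ℝ)) : Set (X → ℝ) :=
  {h | ∃ l ∈ L, ∃ c : ℝ, h = fun x => l x + c}

/-- Support set of `f` inside a family `H` of functions: all members of `H` minorizing `f`. -/
def suppIn (H : Set (X → ℝ)) (f : X → EReal) : Set (X → ℝ) :=
  {h | h ∈ H ∧ ∀ x, (h x : EReal) ≤ f x}

/-- `f` is abstract convex w.r.t. the family `H`: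
`f` is the upper envelope of a nonempty subfamily of `H`. -/
def ConvexIn (H : Set (X → ℝ)) (f : X → EReal) : Prop :=
  ∃ S : Set (X → ℝ), S.Nonempty ∧ S ⊆ H ∧ ∀ x, f x = ⨆ h ∈ S, (h x : EReal)

/-- Abstract convexity of a subset `C` of the family `L` (separation property):
every `l₀ ∈ L \ C` is strictly separated from `C` at some point of `X`. -/
def ConvexSetIn (L : Set (X → ℝ)) (C : Set (X → ℝ)) : Prop :=
  C ⊆ L ∧ ∀ l₀ ∈ L, l₀ ∉ C → ∃ x, (⨆ l ∈ C, (l x : EReal)) < (l₀ x : EReal)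

/-- Epigraph of the conjugate of `f`, as a subset of `𝓛 × ℝ`. -/
def epiConj (L : Set (X → ℝ)) (f : X → EReal) : Set ((X → ℝ) × ℝ) :=
  {p | p.1 ∈ L ∧ fconj f p.1 ≤ (p.2 : EReal)}

/-!
Write `A = ∑ i, f i x`. An element of `∂_ε f_i(x)` is exactly an `l ∈ 𝓛` whose Fenchel–Young
gap `f_i*(l) + f_i(x) - l(x)` is at most `ε`. These gaps are nonnegative, and for a decomposition
`0 = ∑ l_i` they add up to `∑ f_i*(l_i) + A`. Hence `0` lies in every `∂_ε f₁(x) + ⋯ + ∂_ε f_m(x)`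
exactly when the infimal convolution of the conjugates at `0` is at most `-A`. On the other hand
`-A ≤ (∑ f_i)*(0) ≤ (f₁* □ ⋯ □ f_m*)(0)`, with equality on the left exactly when `x` minimizes
`∑ f_i`; hence the second condition is also equivalent to `(f₁* □ ⋯ □ f_m*)(0) ≤ -A`.
-/

open Finset

namespace EReal

@[simp, norm_cast]
lemma coe_finset_sum {ι : Type*} (s : Finset ι) (a : ι → ℝ) :
    ((∑ i ∈ s, a i : ℝ) : EReal) = ∑ i ∈ s, (a i : EReal) :=
  map_sum (⟨⟨(↑), coe_zero⟩, coe_add⟩ : ℝ →+ EReal) a s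

lemma finset_sum_ne_bot {ι : Type*} (s : Finset ι) {t : ι → EReal} (ht : ∀ i ∈ s, t i ≠ ⊥) :
    ∑ i ∈ s, t i ≠ ⊥ :=
  Finset.sum_induction t (· ≠ ⊥) (fun _ _ ha hb => add_ne_bot_iff.2 ⟨ha, hb⟩) zero_ne_bot ht

lemma lt_add_of_sum_lt_sum_add {ι : Type*} {s : Finset ι} {t : ι → EReal} {c : ι → ℝ}
    (hct : ∀ i ∈ s, (c i : EReal) ≤ t i) {ε : ℝ}
    (hsum : ∑ i ∈ s, t i < ((∑ i ∈ s, c i + ε : ℝ) : EReal)) {j : ι} (hj : j ∈ s) :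
    t j < ((c j + ε : ℝ) : EReal) := by
  classical
  set C := ∑ i ∈ s.erase j, c i
  have hle : t j + C ≤ ∑ i ∈ s, t i := by
    rw [← add_sum_erase s t hj, coe_finset_sum]
    exact add_le_add_right (sum_le_sum fun i hi => hct i (mem_of_mem_erase hi)) _
  have hsplit : ∑ i ∈ s, c i + ε = c j + ε + C := by
    rw [← add_sum_erase s c hj]; ring
  have hlt : t j + C < ((c j + ε + C : ℝ) : EReal) := hsplit ▸ hle.trans_lt hsum
  have := add_lt_add_right_coe hlt (-C)
  rwa [add_assoc, ← coe_add, add_neg_cancel, coe_zero, add_zero, ← coe_add,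
    add_neg_cancel_right] at this

end EReal

lemma sub_le_fconj (f : X → EReal) (l : X → ℝ) (y : X) : (l y : EReal) - f y ≤ fconj f l :=
  le_iSup (fun y => (l y : EReal) - f y) y

lemma neg_le_fconj_zero (f : X → EReal) (x : X) : -f x ≤ fconj f 0 := by
  simpa using sub_le_fconj f 0 x

lemma fconj_zero_le_neg_iff (f : X → EReal) (x : X) : fconj f 0 ≤ -f x ↔ ∀ y, f x ≤ f y := by
  simp [fconj]

lemma fconj_add_le {f g : X → EReal} (hf : ∀ y, f y ≠ ⊥) (hg : ∀ y, g y ≠ ⊥) (l₁ l₂ : X → ℝ) :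
    fconj (f + g) (l₁ + l₂) ≤ fconj f l₁ + fconj g l₂ :=
  iSup_le fun y => by
    rw [Pi.add_apply, Pi.add_apply, EReal.coe_add,
      EReal.add_sub_add_comm (.inl (hf y)) (.inr (hg y))]
    exact add_le_add (sub_le_fconj f l₁ y) (sub_le_fconj g l₂ y)

lemma fconj_sum_le {ι : Type*} (s : Finset ι) {f : ι → X → EReal} (hf : ∀ i y, f i y ≠ ⊥)
    (l : ι → X → ℝ) :
    fconj (fun y => ∑ i ∈ s, f i y) (∑ i ∈ s, l i) ≤ ∑ i ∈ s, fconj (f i) (l i) := by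
  induction s using Finset.cons_induction with
  | empty => exact iSup_le fun _ => by simp
  | cons j s hj ih =>
    simp only [sum_cons]
    exact (fconj_add_le (hf j) (fun y => EReal.finset_sum_ne_bot s fun i _ => hf i y) _ _).trans
      (add_le_add_right ih _)

lemma infConv_le_sum (L : Set (X → ℝ)) {m : ℕ} (φ : Fin m → (X → ℝ) → EReal)
    {l : Fin m → X → ℝ} (hl : ∀ i, l i ∈ L) : infConv L φ (∑ i, l i) ≤ ∑ i, φ i (l i) :=
  iInf₂_le_of_le l hl (iInf_le _ rfl)

lemma exists_sum_lt_of_infConv_lt {L : Set (X → ℝ)} {m : ℕ} {φ : Fin m → (X → ℝ) → EReal}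
    {l : X → ℝ} {c : EReal} (h : infConv L φ l < c) :
    ∃ g : Fin m → X → ℝ, (∀ i, g i ∈ L) ∧ ∑ i, g i = l ∧ ∑ i, φ i (g i) < c := by
  simpa only [infConv, iInf_lt_iff, exists_prop] using h

lemma fconj_sum_le_infConv (L : Set (X → ℝ)) {m : ℕ} {f : Fin m → X → EReal}
    (hf : ∀ i y, f i y ≠ ⊥) (l : X → ℝ) :
    fconj (fun y => ∑ i, f i y) l ≤ infConv L (fun i => fconj (f i)) l :=
  le_iInf₂ fun g _ => le_iInf fun hg => hg ▸ fconj_sum_le Finset.univ hf g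

lemma mem_subdiff_iff_fconj_le {L : Set (X → ℝ)} {f : X → EReal} (hf : ∀ y, f y ≠ ⊥) {x : X}
    {a : ℝ} (hfx : f x = a) (ε : ℝ) (l : X → ℝ) :
    l ∈ subdiff L f ε x ↔ l ∈ L ∧ fconj f l ≤ ((l x - a + ε : ℝ) : EReal) := by
  have pointwise : ∀ y, f x + ((l y - l x : ℝ) : EReal) ≤ f y + ε ↔
      (l y : EReal) - f y ≤ ((l x - a + ε : ℝ) : EReal) := by
    intro y
    rcases eq_or_ne (f y) ⊤ with hy | hy
    · simp [hy, EReal.top_add_of_ne_bot (EReal.coe_ne_bot ε)]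
    · lift f y to ℝ using ⟨hy, hf y⟩ with b
      rw [hfx]
      norm_cast
      constructor <;> intro h <;> linarith
  simp only [subdiff, Set.mem_ofPred_eq, fconj, iSup_le_iff, ← pointwise, hfx, EReal.coe_lt_top,
    true_and]

section SumOfSubdifferentials

variable {L : Set (X → ℝ)} {m : ℕ} {f : Fin m → X → EReal} {x : X} {a : Fin m → ℝ}

lemma zero_mem_minkSum_subdiff_iff (hf : ∀ i y, f i y ≠ ⊥) (ha : ∀ i, f i x = a i) (ε : ℝ) :
    (0 : X → ℝ) ∈ minkSum (fun i => subdiff L (f i) ε x) ↔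
      ∃ g : Fin m → X → ℝ, (∀ i, g i ∈ L) ∧ ∑ i, g i = 0 ∧
        ∀ i, fconj (f i) (g i) ≤ ((g i x - a i + ε : ℝ) : EReal) := by
  simp only [minkSum, Set.mem_ofPred_eq, mem_subdiff_iff_fconj_le (hf _) (ha _), forall_and,
    eq_comm (a := (0 : X → ℝ))]
  exact exists_congr fun g => by tauto

lemma sum_apply_eq_zero {ι : Type*} {s : Finset ι} {g : ι → X → ℝ} (hg : ∑ i ∈ s, g i = 0)
    (y : X) : ∑ i ∈ s, g i y = 0 := by
  simpa only [Finset.sum_apply, Pi.zero_apply] using congr_fun hg y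

lemma infConv_fconj_le_of_zero_mem_minkSum_subdiff (hf : ∀ i y, f i y ≠ ⊥)
    (ha : ∀ i, f i x = a i)
    (h : ∀ ε > 0, (0 : X → ℝ) ∈ minkSum (fun i => subdiff L (f i) ε x)) :
    infConv L (fun i => fconj (f i)) 0 ≤ ((-∑ i, a i : ℝ) : EReal) := by
  refine EReal.le_of_forall_lt_iff_le.1 fun z hz => ?_
  have hδ : 0 < z + ∑ i, a i := by linarith [EReal.coe_lt_coe_iff.1 hz]
  set ε := (z + ∑ i, a i) / (m + 1)
  obtain ⟨g, hgL, hg, hgε⟩ :=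
    (zero_mem_minkSum_subdiff_iff hf ha ε).1 (h ε (by positivity))
  have hbound : ∑ i, (g i x - a i + ε) ≤ z := by
    have hmε : m * ε ≤ z + ∑ i, a i := by
      rw [mul_div_assoc', div_le_iff₀ (by positivity)]; nlinarith
    simp only [sum_add_distrib, sum_sub_distrib, sum_apply_eq_zero hg, sum_const, card_univ,
      Fintype.card_fin, nsmul_eq_mul]
    linarith
  calc infConv L (fun i => fconj (f i)) 0
      ≤ ∑ i, fconj (f i) (g i) := hg ▸ infConv_le_sum L _ hgL
    _ ≤ ∑ i, ((g i x - a i + ε : ℝ) : EReal) := sum_le_sum fun i _ => hgε i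
    _ ≤ z := by exact_mod_cast hbound

lemma zero_mem_minkSum_subdiff_of_infConv_fconj_le (hf : ∀ i y, f i y ≠ ⊥)
    (ha : ∀ i, f i x = a i) (h : infConv L (fun i => fconj (f i)) 0 ≤ ((-∑ i, a i : ℝ) : EReal))
    {ε : ℝ} (hε : 0 < ε) : (0 : X → ℝ) ∈ minkSum (fun i => subdiff L (f i) ε x) := by
  obtain ⟨g, hgL, hg, hlt⟩ := exists_sum_lt_of_infConv_lt <|
    h.trans_lt (EReal.coe_lt_coe_iff.2 (lt_add_of_pos_right (-∑ i, a i) hε))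
  have hgap : ∀ i ∈ Finset.univ, ((g i x - a i : ℝ) : EReal) ≤ fconj (f i) (g i) := fun i _ => by
    simpa [ha] using sub_le_fconj (f i) (g i) x
  have hsum : ∑ i, (g i x - a i) = -∑ i, a i := by
    simp [sum_sub_distrib, sum_apply_eq_zero hg]
  refine (zero_mem_minkSum_subdiff_iff hf ha ε).2 ⟨g, hgL, hg, fun i => ?_⟩
  exact (EReal.lt_add_of_sum_lt_sum_add hgap (hsum ▸ hlt) (Finset.mem_univ i)).le

end SumOfSubdifferentials

theorem stmt11_general (L : Set (X → ℝ))
    (m : ℕ) (f : Fin m → X → EReal) (hf : ∀ i y, f i y ≠ ⊥)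
    (x : X) (hx : ∀ i, f i x < ⊤) :
    ((0 : X → ℝ) ∈ ⋂ (ε : ℝ) (_ : 0 < ε),
        minkSum fun i => subdiff L (f i) ε x) ↔
      (fconj (fun y => ∑ i, f i y) 0 = infConv L (fun i => fconj (f i)) 0 ∧
        fconj (fun y => ∑ i, f i y) 0 < ⊤ ∧
        ∀ y : X, ∑ i, f i x ≤ ∑ i, f i y) := by
  choose a ha using fun i => (⟨(f i x).toReal, (EReal.coe_toReal (hx i).ne (hf i x)).symm⟩ :
    ∃ a : ℝ, f i x = a)
  set F := fun y => ∑ i, f i y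
  have hFx : -F x = ((-∑ i, a i : ℝ) : EReal) := by simp [F, ha]
  have hlower : -F x ≤ fconj F 0 := neg_le_fconj_zero F x
  have hweak : fconj F 0 ≤ infConv L (fun i => fconj (f i)) 0 := fconj_sum_le_infConv L hf 0
  rw [Set.mem_iInter₂]
  constructor
  · intro h
    have hinf : infConv L (fun i => fconj (f i)) 0 ≤ -F x :=
      hFx ▸ infConv_fconj_le_of_zero_mem_minkSum_subdiff hf ha h
    have hmin : fconj F 0 ≤ -F x := hweak.trans hinf
    refine ⟨le_antisymm hweak (hinf.trans hlower), hmin.trans_lt ?_,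
      (fconj_zero_le_neg_iff F x).1 hmin⟩
    exact hFx ▸ EReal.coe_lt_top _
  · rintro ⟨hdual, -, hmin⟩ ε hε
    refine zero_mem_minkSum_subdiff_of_infConv_fconj_le hf ha ?_ hε
    exact hFx ▸ hdual ▸ (fconj_zero_le_neg_iff F x).2 hmin

/-- for `x ∈ ⋂ dom f_i`, `0 ∈ ⋂_{ε > 0} (∂_ε f₁(x) + ⋯ + ∂_ε f_m(x))`
iff zero duality gap holds (conjugate of the sum equals the infimal convolution of the
conjugates at `0`, finitely) and `x` is a global minimizer of `f₁ + ⋯ + f_m`. -/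
theorem stmt11 [Nonempty X] (L : Set (X → ℝ)) (hL : IsLinSpace L)
    (h0 : (0 : X → ℝ) ∈ L)
    (m : ℕ) (hm : 2 ≤ m) (f : Fin m → X → EReal) (hf : ∀ i y, f i y ≠ ⊥)
    (x : X) (hx : ∀ i, f i x < ⊤) :
    ((0 : X → ℝ) ∈ ⋂ (ε : ℝ) (_ : 0 < ε),
        minkSum fun i => subdiff L (f i) ε x) ↔
      (fconj (fun y => ∑ i, f i y) 0 = infConv L (fun i => fconj (f i)) 0 ∧
        fconj (fun y => ∑ i, f i y) 0 < ⊤ ∧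
        ∀ y : X, ∑ i, f i x ≤ ∑ i, f i y) :=
  stmt11_general L m f hf x hx
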